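/- For the hypergraph product construction from a single parity check matrix H, the resulting check matrices satisfy H_X · H_Z^T = 0 over F_2, so the construction yields a valid CSS code. -/

import Mathlib

open Kronecker

namespace Matrix

variable {R m₁ n₁ m₂ n₂ : Type*} [DecidableEq m₁] [DecidableEq n₁] [DecidableEq m₂] [DecidableEq n₂]

def hypergraphProductX [Zero R] [One R] [Mul R] (H₁ : Matrix m₁ n₁ R) (H₂ : Matrix m₂ n₂ R) :
    Matrix (m₁ × n₂) (n₁ × n₂ ⊕ m₁ × m₂) R :=
  fromCols (H₁ ⊗ₖ 1) (1 ⊗ₖ H₂ᵀ)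

def hypergraphProductZ [Zero R] [One R] [Mul R] (H₁ : Matrix m₁ n₁ R) (H₂ : Matrix m₂ n₂ R) :
    Matrix (n₁ × m₂) (n₁ × n₂ ⊕ m₁ × m₂) R :=
  fromCols (1 ⊗ₖ H₂) (H₁ᵀ ⊗ₖ 1)

variable [Fintype m₁] [Fintype n₁] [Fintype m₂] [Fintype n₂]

/-- Both block products equal `H₁ ⊗ H₂ᵀ` by the mixed-product property `(A ⊗ B)(C ⊗ D) = AC ⊗ BD`. -/
theorem hypergraphProductX_mul_transpose_hypergraphProductZ [CommSemiring R]
    (H₁ : Matrix m₁ n₁ R) (H₂ : Matrix m₂ n₂ R) :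
    hypergraphProductX H₁ H₂ * (hypergraphProductZ H₁ H₂)ᵀ = H₁ ⊗ₖ H₂ᵀ + H₁ ⊗ₖ H₂ᵀ := by
  rw [hypergraphProductX, hypergraphProductZ, transpose_fromCols, fromCols_mul_fromRows]
  simp only [← kroneckerMap_transpose, transpose_one, transpose_transpose, ← mul_kronecker_mul,
    Matrix.mul_one, Matrix.one_mul]

theorem hypergraphProductX_mul_transpose_hypergraphProductZ_eq_zero [CommRing R] [CharP R 2]
    (H₁ : Matrix m₁ n₁ R) (H₂ : Matrix m₂ n₂ R) :
    hypergraphProductX H₁ H₂ * (hypergraphProductZ H₁ H₂)ᵀ = 0 := by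
  rw [hypergraphProductX_mul_transpose_hypergraphProductZ]
  ext i j
  exact CharTwo.add_self_eq_zero _

end Matrix

/-- The hypergraph product check matrices H_X = (H ⊗ I_n | I_m ⊗ Hᵀ) and
H_Z = (I_n ⊗ H | Hᵀ ⊗ I_m) satisfy H_X · H_Zᵀ = 0 over F_2, giving a valid CSS code. -/
theorem stmt_4 (m n : ℕ) (H : Matrix (Fin m) (Fin n) (ZMod 2)) :
    (Matrix.fromCols (H ⊗ₖ (1 : Matrix (Fin n) (Fin n) (ZMod 2)))
        ((1 : Matrix (Fin m) (Fin m) (ZMod 2)) ⊗ₖ H.transpose)) *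
      (Matrix.fromCols ((1 : Matrix (Fin n) (Fin n) (ZMod 2)) ⊗ₖ H)
        (H.transpose ⊗ₖ (1 : Matrix (Fin m) (Fin m) (ZMod 2)))).transpose = 0 :=
  Matrix.hypergraphProductX_mul_transpose_hypergraphProductZ_eq_zero H H
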